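/- Let Φ be a finite point set in ℝ^d, Γ a connected graph on k vertices, and for the window W ⊂ ℝ^d and radius r define J(Γ) using the condition Φ∩W(B_X(r)) = k (isolation within the window) and J̃(Γ) using Φ(B_X(r)) = k (isolation in all of ℝ^d). Then J̃(Γ) ≤ J(Γ) ≤ J̃(Γ) + G', where G' is the number of Γ-subgraphs with all vertices in W but at least one vertex within distance (k+1)r of the boundary of W. -/

import Mathlib

open Metric

/-- The geometric graph on the points `x 0, …, x (k-1)` of `ℝ^d` with radius `r`:
vertices `i ≠ j` are adjacent iff `dist (x i) (x j) ≤ r`. -/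
def geomGraph {d k : ℕ} (x : Fin k → EuclideanSpace ℝ (Fin d)) (r : ℝ) :
    SimpleGraph (Fin k) where
  Adj i j := i ≠ j ∧ dist (x i) (x j) ≤ r
  symm := by
    constructor
    intro i j h
    exact ⟨h.1.symm, by rw [dist_comm]; exact h.2⟩
  loopless := by constructor; intro i h; exact h.1 rfl

open Classical in
/-- `h_Γ(x, r) = 1` iff the geometric graph on `x` with radius `r` is isomorphic to `Γ`. -/
noncomputable def hGamma {d k : ℕ} (Γ : SimpleGraph (Fin k))
    (x : Fin k → EuclideanSpace ℝ (Fin d)) (r : ℝ) : ℝ :=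
  if Nonempty (geomGraph x r ≃g Γ) then 1 else 0


open Classical in
/-- `Γ`-component count of `Φ ∩ W` with isolation required only *within the window* `W`:
the tuple must contain all points of `Φ ∩ W` within distance `r` of it. -/
noncomputable def componentCountWin {d k : ℕ} (Φ : Finset (EuclideanSpace ℝ (Fin d)))
    (W : Set (EuclideanSpace ℝ (Fin d))) (Γ : SimpleGraph (Fin k)) (r : ℝ) : ℝ :=
  (1 / (Nat.factorial k : ℝ)) *
    ∑ x : Fin k → Φ, (if Function.Injective x ∧ ∀ i, (x i : EuclideanSpace ℝ (Fin d)) ∈ W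
        then 1 else 0) *
      hGamma Γ (fun i => (x i : EuclideanSpace ℝ (Fin d))) r *
      (if (Φ.filter (fun p => p ∈ W ∧
          ∃ i, dist p (x i : EuclideanSpace ℝ (Fin d)) ≤ r)).card = k then 1 else 0)

open Classical in
/-- `Γ`-component count of `Φ ∩ W` with isolation required in all of `ℝ^d`. -/
noncomputable def componentCountGlob {d k : ℕ} (Φ : Finset (EuclideanSpace ℝ (Fin d)))
    (W : Set (EuclideanSpace ℝ (Fin d))) (Γ : SimpleGraph (Fin k)) (r : ℝ) : ℝ :=
  (1 / (Nat.factorial k : ℝ)) *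
    ∑ x : Fin k → Φ, (if Function.Injective x ∧ ∀ i, (x i : EuclideanSpace ℝ (Fin d)) ∈ W
        then 1 else 0) *
      hGamma Γ (fun i => (x i : EuclideanSpace ℝ (Fin d))) r *
      (if (Φ.filter (fun p =>
          ∃ i, dist p (x i : EuclideanSpace ℝ (Fin d)) ≤ r)).card = k then 1 else 0)

open Classical in
/-- Number of `Γ`-subgraphs of `Φ ∩ W` having at least one vertex within distance
`(k+1)·r` of the boundary of `W`. -/
noncomputable def boundaryCount {d k : ℕ} (Φ : Finset (EuclideanSpace ℝ (Fin d)))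
    (W : Set (EuclideanSpace ℝ (Fin d))) (Γ : SimpleGraph (Fin k)) (r : ℝ) : ℝ :=
  (1 / (Nat.factorial k : ℝ)) *
    ∑ x : Fin k → Φ, (if Function.Injective x ∧ ∀ i, (x i : EuclideanSpace ℝ (Fin d)) ∈ W
        then 1 else 0) *
      hGamma Γ (fun i => (x i : EuclideanSpace ℝ (Fin d))) r *
      (if ∃ i, Metric.infDist (x i : EuclideanSpace ℝ (Fin d)) (frontier W) ≤ (k+1) * r
        then 1 else 0)

/-!
A tuple `x` with all vertices in `W` is counted by `J` but not by `J̃` only if some point `p ∉ W`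
of `Φ` lies within distance `r` of a vertex `x i ∈ W`; the segment from `x i` to `p` then crosses
the frontier of `W`, so `x i` is within distance `r ≤ (k+1) r` of it. Conversely, if the `r`-balls
around the tuple contain exactly `k` points of `Φ`, these are the vertices themselves, so they all
lie in `W` and the two isolation conditions agree.
-/

theorem IsPreconnected.inter_frontier_nonempty {X : Type*} [TopologicalSpace X] {s t : Set X}
    (hs : IsPreconnected s) (hst : (s ∩ t).Nonempty) (hst' : (s \ t).Nonempty) :
    (s ∩ frontier t).Nonempty := by
  by_contra h
  have hcover : s ⊆ interior t ∪ (closure t)ᶜ := fun y hy => by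
    by_cases hyt : y ∈ interior t
    · exact .inl hyt
    · exact .inr fun hyc => h ⟨y, hy, hyc, hyt⟩
  have hdisj : Disjoint (interior t) (closure t)ᶜ :=
    disjoint_compl_right.mono_left interior_subset_closure
  rcases hs.subset_or_subset isOpen_interior isClosed_closure.isOpen_compl hdisj hcover
    with hsub | hsub
  · obtain ⟨b, hbs, hbt⟩ := hst'
    exact hbt (interior_subset (hsub hbs))
  · obtain ⟨a, has, hat⟩ := hst
    exact hsub has (subset_closure hat)

theorem Metric.infDist_frontier_le_dist {E : Type*} [NormedAddCommGroup E] [NormedSpace ℝ E]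
    {W : Set E} {x p : E} (hx : x ∈ W) (hp : p ∉ W) : infDist x (frontier W) ≤ dist x p := by
  obtain ⟨y, hy_seg, hy_fr⟩ := (convex_segment x p).isPreconnected.inter_frontier_nonempty
    ⟨x, left_mem_segment ℝ x p, hx⟩ ⟨p, right_mem_segment ℝ x p, hp⟩
  calc infDist x (frontier W) ≤ dist x y := infDist_le_dist_of_mem hy_fr
    _ ≤ dist x p := by linarith [dist_add_dist_of_mem_segment hy_seg, dist_nonneg (x := y) (y := p)]

section Isolation

open Classical

variable {E : Type*} {n : ℕ} {W : Set E} {x : Fin n → E} {r : ℝ}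

theorem filter_mem_window_eq_or_exists_infDist_frontier_le [NormedAddCommGroup E]
    [NormedSpace ℝ E] (Φ : Finset E) (hxW : ∀ i, x i ∈ W) :
    Φ.filter (fun p => p ∈ W ∧ ∃ i, dist p (x i) ≤ r) = Φ.filter (fun p => ∃ i, dist p (x i) ≤ r)
      ∨ ∃ i, infDist (x i) (frontier W) ≤ r := by
  by_cases h : ∀ p ∈ Φ, (∃ i, dist p (x i) ≤ r) → p ∈ W
  · exact .inl (Finset.filter_congr fun p hp => ⟨And.right, fun hnear => ⟨h p hp hnear, hnear⟩⟩)
  · push Not at h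
    obtain ⟨p, -, ⟨i, hpi⟩, hpW⟩ := h
    exact .inr ⟨i, (infDist_frontier_le_dist (hxW i) hpW).trans (dist_comm p (x i) ▸ hpi)⟩

theorem filter_mem_window_eq_of_card_filter_eq [PseudoMetricSpace E] {Φ : Finset E}
    (hx : Function.Injective x) (hxΦ : ∀ i, x i ∈ Φ) (hxW : ∀ i, x i ∈ W)
    (hcard : (Φ.filter (fun p => ∃ i, dist p (x i) ≤ r)).card = n) :
    Φ.filter (fun p => p ∈ W ∧ ∃ i, dist p (x i) ≤ r) =
      Φ.filter (fun p => ∃ i, dist p (x i) ≤ r) := by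
  refine Finset.filter_congr fun p hp => ⟨And.right, fun hnear => ⟨?_, hnear⟩⟩
  obtain ⟨i, hpi⟩ := hnear
  have hr : 0 ≤ r := dist_nonneg.trans hpi
  have himage : Finset.univ.image x = Φ.filter (fun p => ∃ i, dist p (x i) ≤ r) := by
    refine Finset.eq_of_subset_of_card_le (fun q hq => ?_) ?_
    · obtain ⟨j, -, rfl⟩ := Finset.mem_image.1 hq
      exact Finset.mem_filter.2 ⟨hxΦ j, j, by simpa using hr⟩
    · rw [hcard, Finset.card_image_of_injective _ hx, Finset.card_univ, Fintype.card_fin]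
  have hp_image : p ∈ Finset.univ.image x := himage ▸ Finset.mem_filter.2 ⟨hp, i, hpi⟩
  obtain ⟨j, -, rfl⟩ := Finset.mem_image.1 hp_image
  exact hxW j

end Isolation

theorem hGamma_nonneg {d k : ℕ} (Γ : SimpleGraph (Fin k)) (x : Fin k → EuclideanSpace ℝ (Fin d))
    (r : ℝ) : 0 ≤ hGamma Γ x r := by
  unfold hGamma
  split_ifs <;> norm_num

theorem componentCountGlob_le_componentCountWin {d k : ℕ} (Φ : Finset (EuclideanSpace ℝ (Fin d)))
    (W : Set (EuclideanSpace ℝ (Fin d))) (Γ : SimpleGraph (Fin k)) (r : ℝ) :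
    componentCountGlob Φ W Γ r ≤ componentCountWin Φ W Γ r := by
  unfold componentCountGlob componentCountWin
  refine mul_le_mul_of_nonneg_left (Finset.sum_le_sum fun x _ => ?_) (by positivity)
  by_cases hx : Function.Injective x ∧ ∀ i, (x i : EuclideanSpace ℝ (Fin d)) ∈ W
  · rw [if_pos hx, one_mul]
    refine mul_le_mul_of_nonneg_left ?_ (hGamma_nonneg _ _ _)
    split_ifs with hglob hwin <;> norm_num
    refine hwin ?_
    rwa [filter_mem_window_eq_of_card_filter_eq (x := fun i => (x i : EuclideanSpace ℝ (Fin d)))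
      (Subtype.val_injective.comp hx.1) (fun i => (x i).2) hx.2 hglob]
  · simp [hx]

theorem componentCountWin_le_componentCountGlob_add_boundaryCount {d k : ℕ}
    (Φ : Finset (EuclideanSpace ℝ (Fin d))) (W : Set (EuclideanSpace ℝ (Fin d)))
    (Γ : SimpleGraph (Fin k)) (r : ℝ) :
    componentCountWin Φ W Γ r ≤ componentCountGlob Φ W Γ r + boundaryCount Φ W Γ r := by
  unfold componentCountGlob componentCountWin boundaryCount
  rw [← mul_add, ← Finset.sum_add_distrib]
  refine mul_le_mul_of_nonneg_left (Finset.sum_le_sum fun x _ => ?_) (by positivity)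
  by_cases hx : Function.Injective x ∧ ∀ i, (x i : EuclideanSpace ℝ (Fin d)) ∈ W
  · rw [if_pos hx, one_mul, ← mul_add]
    refine mul_le_mul_of_nonneg_left ?_ (hGamma_nonneg _ _ _)
    rcases filter_mem_window_eq_or_exists_infDist_frontier_le (r := r) Φ hx.2 with hS | ⟨i, hi⟩
    · rw [hS]
      split_ifs <;> norm_num
    · have hnear : ∃ i, infDist (x i : EuclideanSpace ℝ (Fin d)) (frontier W) ≤ (k + 1) * r :=
        ⟨i, hi.trans (le_mul_of_one_le_left (infDist_nonneg.trans hi) (by linarith))⟩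
      rw [if_pos hnear]
      split_ifs <;> norm_num
  · simp [hx]

theorem stmt_18_general {d k : ℕ} (Γ : SimpleGraph (Fin k))
    (Φ : Finset (EuclideanSpace ℝ (Fin d))) (W : Set (EuclideanSpace ℝ (Fin d)))
    (r : ℝ) :
    componentCountGlob Φ W Γ r ≤ componentCountWin Φ W Γ r ∧
      componentCountWin Φ W Γ r ≤ componentCountGlob Φ W Γ r + boundaryCount Φ W Γ r :=
  ⟨componentCountGlob_le_componentCountWin Φ W Γ r,
    componentCountWin_le_componentCountGlob_add_boundaryCount Φ W Γ r⟩

/-- `J̃(Γ) ≤ J(Γ) ≤ J̃(Γ) + G'`, where `J` requires isolation only within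
the window `W`, `J̃` requires isolation in all of `ℝ^d`, and `G'` counts `Γ`-subgraphs
within distance `(k+1)r` of the boundary of `W`. -/
theorem stmt_18 {d k : ℕ} (hk : 2 ≤ k) (Γ : SimpleGraph (Fin k)) (hconn : Γ.Connected)
    (Φ : Finset (EuclideanSpace ℝ (Fin d))) (W : Set (EuclideanSpace ℝ (Fin d)))
    (r : ℝ) (hr : 0 < r) :
    componentCountGlob Φ W Γ r ≤ componentCountWin Φ W Γ r ∧
      componentCountWin Φ W Γ r ≤ componentCountGlob Φ W Γ r + boundaryCount Φ W Γ r :=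
  stmt_18_general Γ Φ W r
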